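/- Let L ≥ 1 and let Y be an analytic metric space (there exist a complete separable metric space Z and a continuous surjection g : Z → Y) that is L-Lipschitz connected (for all x,y ∈ Y there is an L-Lipschitz map f : [0, d_Y(x,y)] → Y with f(0) = x and f(d_Y(x,y)) = y). If there exists a surjective Lipschitz map f : Y → X onto a metric space X, then X is analytic, Lipschitz connected, and the intrinsic metric d_IX of X is separable, i.e. there is a countable set D ⊆ X such that for every x ∈ X and ε > 0 some y ∈ D satisfies d_IX(x,y) < ε. -/

import Mathlib

/-- The metric segment `[x,z] = {y : d(x,y) + d(y,z) = d(x,z)}`. -/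
def MetricSegment {X : Type*} [MetricSpace X] (x z : X) : Set X :=
  {y | dist x y + dist y z = dist x z}

/-- A metric space is an ℝ-tree if every metric segment `[x,y]` is isometric to the
real interval `[0, d(x,y)]`, and `[x,y] ∩ [y,z] = {y}` implies `d(x,z) = d(x,y) + d(y,z)`. -/
def IsRTree (X : Type*) [MetricSpace X] : Prop :=
  (∀ x y : X, Nonempty ((MetricSegment x y) ≃ᵢ (Set.Icc (0:ℝ) (dist x y)))) ∧
  (∀ x y z : X, MetricSegment x y ∩ MetricSegment y z = {y} →
    dist x z = dist x y + dist y z)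

/-- A metric space `X` is injective if every 1-Lipschitz map into `X` from a subset of a
metric space extends to a 1-Lipschitz map on the whole space. -/
def IsInjectiveMetricSpace (X : Type*) [MetricSpace X] : Prop :=
  ∀ (A : Type) [MetricSpace A] (B : Set A) (f : B → X), LipschitzWith 1 f →
    ∃ g : A → X, LipschitzWith 1 g ∧ ∀ b : B, g b = f b

/-- A metric space is Lipschitz connected if any two points are joined by a Lipschitz
path `f : [0,1] → X`. -/
def LipschitzConnected (X : Type*) [MetricSpace X] : Prop :=
  ∀ x y : X, ∃ f : Set.Icc (0:ℝ) 1 → X, (∃ K : NNReal, LipschitzWith K f) ∧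
    f ⟨0, by norm_num⟩ = x ∧ f ⟨1, by norm_num⟩ = y

/-- The intrinsic metric: the infimum of Lipschitz constants of paths joining `x` and `y`. -/
noncomputable def intrinsicDist {X : Type*} [MetricSpace X] (x y : X) : ℝ :=
  sInf {K : ℝ | 0 ≤ K ∧ ∃ f : Set.Icc (0:ℝ) 1 → X,
    LipschitzWith K.toNNReal f ∧ f ⟨0, by norm_num⟩ = x ∧ f ⟨1, by norm_num⟩ = y}

/-- A metric space is analytic if it is a continuous image of a complete separable
metric space. -/
def IsAnalyticMetricSpace (X : Type*) [MetricSpace X] : Prop :=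
  ∃ (Z : Type) (_ : MetricSpace Z) (_ : CompleteSpace Z)
    (_ : TopologicalSpace.SeparableSpace Z) (g : Z → X),
      Continuous g ∧ Function.Surjective g

/-- `L`-Lipschitz connectedness: any two points `x,y` are joined by an `L`-Lipschitz
path defined on `[0, d(x,y)]`. -/
def LLipschitzConnected (L : NNReal) (Y : Type*) [MetricSpace Y] : Prop :=
  ∀ x y : Y, ∃ f : Set.Icc (0:ℝ) (dist x y) → Y, LipschitzWith L f ∧
    f ⟨0, ⟨le_refl 0, dist_nonneg⟩⟩ = x ∧ f ⟨dist x y, ⟨dist_nonneg, le_refl _⟩⟩ = y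

/-- Hyperconvexity: every family of closed balls with `d(xᵢ,xⱼ) ≤ rᵢ + rⱼ` has a
common point. -/
def Hyperconvex (X : Type*) [MetricSpace X] : Prop :=
  ∀ (I : Type) (x : I → X) (r : I → ℝ), (∀ i, 0 ≤ r i) →
    (∀ i j, dist (x i) (x j) ≤ r i + r j) →
    (⋂ i, Metric.closedBall (x i) (r i)).Nonempty

/-- Metric convexity. -/
def MetricallyConvex (X : Type*) [MetricSpace X] : Prop :=
  ∀ a b : X, ∀ t : ℝ, t ∈ Set.Icc (0:ℝ) 1 →
    ∃ x : X, dist a x = t * dist a b ∧ dist x b = (1 - t) * dist a b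

/-- Binary intersection property: every family of pairwise intersecting closed balls
has a common point. -/
def BinaryIntersectionProperty (X : Type*) [MetricSpace X] : Prop :=
  ∀ (I : Type) (x : I → X) (r : I → ℝ),
    (∀ i j, (Metric.closedBall (x i) (r i) ∩ Metric.closedBall (x j) (r j)).Nonempty) →
    (⋂ i, Metric.closedBall (x i) (r i)).Nonempty

/-! Reparametrizing an `L`-Lipschitz path from `a` to `b` over `[0,1]` and composing with the
`K`-Lipschitz map `f` gives a path of Lipschitz constant `K L d(a,b)` from `f a` to `f b`, so
`d_I(f a, f b) ≤ K L d(a,b)`. Hence `f` pushes Lipschitz connectedness forward, and it maps a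
countable dense subset of `Y` (analytic spaces are separable) onto a `d_I`-dense subset of `X`. -/

open NNReal

theorem exists_countable_forall_lt_of_le_mul_dist {X Y : Type*} [PseudoMetricSpace Y]
    [TopologicalSpace.SeparableSpace Y]
    {f : Y → X} (hsurj : Function.Surjective f) (d : X → X → ℝ) {M : ℝ}
    (hd : ∀ a b, d (f a) (f b) ≤ M * dist a b) :
    ∃ D : Set X, D.Countable ∧ ∀ x : X, ∀ ε : ℝ, 0 < ε → ∃ y ∈ D, d x y < ε := by
  obtain ⟨s, hs, hsdense⟩ := TopologicalSpace.exists_countable_dense Y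
  refine ⟨f '' s, hs.image f, fun x ε hε => ?_⟩
  obtain ⟨a, rfl⟩ := hsurj x
  have hM : 0 < |M| + 1 := by positivity
  obtain ⟨c, hcs, hac⟩ := Metric.mem_closure_iff.1 (hsdense a) (ε / (|M| + 1)) (by positivity)
  refine ⟨f c, Set.mem_image_of_mem f hcs, ?_⟩
  calc d (f a) (f c) ≤ M * dist a c := hd a c
    _ ≤ |M| * dist a c := mul_le_mul_of_nonneg_right (le_abs_self M) dist_nonneg
    _ ≤ (|M| + 1) * dist a c := by nlinarith [dist_nonneg (x := a) (y := c)]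
    _ < (|M| + 1) * (ε / (|M| + 1)) := mul_lt_mul_of_pos_left hac hM
    _ = ε := mul_div_cancel₀ ε hM.ne'

section

variable {X Y : Type*} [MetricSpace X] [MetricSpace Y]

theorem IsAnalyticMetricSpace.of_surjective (hY : IsAnalyticMetricSpace Y) {f : Y → X}
    (hf : Continuous f) (hsurj : Function.Surjective f) : IsAnalyticMetricSpace X := by
  obtain ⟨Z, _, _, _, g, hg, hgsurj⟩ := hY
  exact ⟨Z, _, ‹_›, ‹_›, f ∘ g, hf.comp hg, hsurj.comp hgsurj⟩

theorem IsAnalyticMetricSpace.separableSpace (hY : IsAnalyticMetricSpace Y) :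
    TopologicalSpace.SeparableSpace Y := by
  obtain ⟨Z, _, _, _, g, hg, hgsurj⟩ := hY
  exact hgsurj.denseRange.separableSpace hg

theorem intrinsicDist_le_of_lipschitzWith {x y : X} {C : ℝ≥0} {p : Set.Icc (0:ℝ) 1 → X}
    (hp : LipschitzWith C p) (h0 : p ⟨0, by norm_num⟩ = x) (h1 : p ⟨1, by norm_num⟩ = y) :
    intrinsicDist x y ≤ C :=
  csInf_le ⟨0, fun _ hK => hK.1⟩ ⟨C.2, p, by rwa [Real.toNNReal_coe], h0, h1⟩

theorem LLipschitzConnected.exists_unitInterval_path {L : ℝ≥0} (hY : LLipschitzConnected L Y)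
    (a b : Y) : ∃ p : Set.Icc (0:ℝ) 1 → Y, LipschitzWith (L * (dist a b).toNNReal) p ∧
      p ⟨0, by norm_num⟩ = a ∧ p ⟨1, by norm_num⟩ = b := by
  obtain ⟨h, hh, h0, h1⟩ := hY a b
  have hd : 0 ≤ dist a b := dist_nonneg
  let φ : Set.Icc (0:ℝ) 1 → Set.Icc (0:ℝ) (dist a b) := fun t =>
    ⟨t * dist a b, mul_nonneg t.2.1 hd, mul_le_of_le_one_left hd t.2.2⟩
  have hφ : LipschitzWith (dist a b).toNNReal φ := by
    refine LipschitzWith.of_dist_le_mul fun s t => ?_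
    simp only [φ, Subtype.dist_eq, Real.dist_eq, ← sub_mul, abs_mul, abs_of_nonneg hd,
      Real.coe_toNNReal _ hd, mul_comm (dist a b), le_refl]
  refine ⟨h ∘ φ, hh.comp hφ, ?_, ?_⟩
  · simpa [φ] using h0
  · simpa [φ] using h1

theorem LLipschitzConnected.intrinsicDist_le {L K : ℝ≥0} (hY : LLipschitzConnected L Y)
    {f : Y → X} (hf : LipschitzWith K f) (a b : Y) :
    intrinsicDist (f a) (f b) ≤ K * L * dist a b := by
  obtain ⟨p, hp, h0, h1⟩ := hY.exists_unitInterval_path a b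
  calc intrinsicDist (f a) (f b) ≤ (K * (L * (dist a b).toNNReal) : ℝ≥0) :=
        intrinsicDist_le_of_lipschitzWith (hf.comp hp) (congrArg f h0) (congrArg f h1)
    _ = K * L * dist a b := by push_cast [Real.coe_toNNReal _ dist_nonneg]; ring

theorem LLipschitzConnected.lipschitzConnected_of_surjective {L K : ℝ≥0}
    (hY : LLipschitzConnected L Y) {f : Y → X} (hf : LipschitzWith K f)
    (hsurj : Function.Surjective f) : LipschitzConnected X := by
  intro x y
  obtain ⟨a, rfl⟩ := hsurj x
  obtain ⟨b, rfl⟩ := hsurj y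
  obtain ⟨p, hp, h0, h1⟩ := hY.exists_unitInterval_path a b
  exact ⟨f ∘ p, ⟨_, hf.comp hp⟩, congrArg f h0, congrArg f h1⟩

end

theorem image_of_analytic_L_lipschitz_connected_general (L : NNReal)
    (Y : Type) [MetricSpace Y] (hYan : IsAnalyticMetricSpace Y)
    (hY : LLipschitzConnected L Y)
    (X : Type) [MetricSpace X] (f : Y → X)
    (hsurj : Function.Surjective f) (hlip : ∃ K : NNReal, LipschitzWith K f) :
    IsAnalyticMetricSpace X ∧ LipschitzConnected X ∧
      ∃ D : Set X, D.Countable ∧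
        ∀ x : X, ∀ ε : ℝ, 0 < ε → ∃ y ∈ D, intrinsicDist x y < ε := by
  obtain ⟨K, hK⟩ := hlip
  have := hYan.separableSpace
  exact ⟨hYan.of_surjective hK.continuous hsurj, hY.lipschitzConnected_of_surjective hK hsurj,
    exists_countable_forall_lt_of_le_mul_dist hsurj intrinsicDist (hY.intrinsicDist_le hK)⟩

/-- A Lipschitz image of an `L`-Lipschitz connected analytic metric space is analytic,
Lipschitz connected, and has separable intrinsic metric. -/
theorem image_of_analytic_L_lipschitz_connected (L : NNReal) (hL : 1 ≤ L)
    (Y : Type) [MetricSpace Y] (hYan : IsAnalyticMetricSpace Y)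
    (hY : LLipschitzConnected L Y)
    (X : Type) [MetricSpace X] (f : Y → X)
    (hsurj : Function.Surjective f) (hlip : ∃ K : NNReal, LipschitzWith K f) :
    IsAnalyticMetricSpace X ∧ LipschitzConnected X ∧
      ∃ D : Set X, D.Countable ∧
        ∀ x : X, ∀ ε : ℝ, 0 < ε → ∃ y ∈ D, intrinsicDist x y < ε :=
  image_of_analytic_L_lipschitz_connected_general L Y hYan hY X f hsurj hlip
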